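/- Let G be an almost simple group with socle S, let K be a permutation group with G* ≤ K ≤ Sym(G), let L be the minimal block of K, and let K_𝔏 be the subgroup of all elements of K that map each right coset of L to itself. Then for every right coset X of L, the permutation group on X induced by K_𝔏 is primitive (transitive with only trivial blocks) and contains every permutation of X of the form x ↦ l₁xl₂ with l₁, l₂ ∈ L. -/

import Mathlib

/-! A nontrivial `K`-block through `1` is closed under left translation by its own elements and
under conjugation by `G`, so it is a subgroup normalized by `S`; as `S` is simple with trivial
centralizer, it contains `S`. Hence `L` is a normal subgroup containing `S`, every `k ∈ K`
permutes the right cosets of `L`, and `K` normalizes `K_𝔏`. The translations `x ↦ l₁ * x * l₂`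
with `l₁, l₂ ∈ L` lie in `K_𝔏`, which gives transitivity and the last claim.

For primitivity, translate a nontrivial `K_𝔏`-block inside a coset into `L`. The intersection
`M` of all nontrivial `K_𝔏`-blocks through `1` inside `L` is again one, hence a subgroup, and
every element of `K` fixing `1` permutes these blocks and so preserves `M`. This makes `M` a
`K`-block, so `L ⊆ M` by minimality of `L`, and the translated block is all of `L`. -/

/-- The subgroup of `Sym(A)` consisting of the right translations `x ↦ x * g`. -/
def rightMuls (A : Type*) [Group A] : Subgroup (Equiv.Perm A) :=
  (MulAction.toPermHom Aᵐᵒᵖ A).range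

/-- The holomorph of `A`, i.e. the normalizer in `Sym(A)` of the group of right
translations. -/
def Hol (A : Type*) [Group A] : Subgroup (Equiv.Perm A) :=
  Subgroup.normalizer (rightMuls A : Set (Equiv.Perm A))

/-- `D(2,A)`: the subgroup of `Sym(A)` generated by `Hol(A)` and the inversion
permutation `g ↦ g⁻¹`. -/
def D2 (A : Type*) [Group A] : Subgroup (Equiv.Perm A) :=
  Hol A ⊔ Subgroup.closure {Equiv.inv A}

/-- The homomorphism `H × H →* Sym(A)` sending `(h₁, h₂)` to `x ↦ h₁ * x * h₂⁻¹`. -/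
def biTransHom {A : Type*} [Group A] (H : Subgroup A) : H × H →* Equiv.Perm A where
  toFun p := (Equiv.mulLeft (p.1 : A)).trans (Equiv.mulRight ((p.2 : A)⁻¹))
  map_one' := by ext x; simp
  map_mul' p q := by ext x; simp [mul_assoc]

/-- `H*`: the subgroup of `Sym(A)` of all permutations `x ↦ h₁ * x * h₂` with
`h₁, h₂ ∈ H`. -/
def starGroup {A : Type*} [Group A] (H : Subgroup A) : Subgroup (Equiv.Perm A) :=
  (biTransHom H).range

/-- The automorphism group of the Cayley graph `Cay(A, X)`: all permutations `f`
of `A` such that `h * g⁻¹ ∈ X ↔ f h * (f g)⁻¹ ∈ X` for all `g, h`. -/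
def cayAut {A : Type*} [Group A] (X : Set A) : Subgroup (Equiv.Perm A) where
  carrier := {f : Equiv.Perm A | ∀ g h : A, h * g⁻¹ ∈ X ↔ f h * (f g)⁻¹ ∈ X}
  one_mem' := by intro g h; simp
  mul_mem' := by
    intro a b ha hb g h
    simpa [Equiv.Perm.mul_apply] using (hb g h).trans (ha (b g) (b h))
  inv_mem' := by
    intro a ha g h
    simpa using (ha (a⁻¹ g) (a⁻¹ h)).symm

/-- A `K`-block: a subset `B` such that every `k ∈ K` either fixes `B` setwise or
moves it to a disjoint set. -/
def IsBlock {A : Type*} [Group A] (K : Subgroup (Equiv.Perm A)) (B : Set A) : Prop :=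
  ∀ k ∈ K, (k : Equiv.Perm A) '' B = B ∨ ((k : Equiv.Perm A) '' B) ∩ B = ∅

/-- The minimal block of `K`: the intersection of all `K`-blocks of size at least 2
containing the identity. -/
def minBlock {A : Type*} [Group A] (K : Subgroup (Equiv.Perm A)) : Set A :=
  ⋂₀ {B : Set A | IsBlock K B ∧ (1 : A) ∈ B ∧ 2 ≤ B.ncard}

/-- The right coset `L * g`. -/
def rcoset {A : Type*} [Group A] (L : Subgroup A) (g : A) : Set A :=
  {x : A | x * g⁻¹ ∈ L}

/-- `K_𝔏`: the subgroup of all elements of `K` mapping each right coset of `L` to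
itself. -/
def stabCosets {A : Type*} [Group A] (K : Subgroup (Equiv.Perm A)) (L : Subgroup A) :
    Subgroup (Equiv.Perm A) where
  carrier := {f : Equiv.Perm A | f ∈ K ∧ ∀ x : A, f x * x⁻¹ ∈ L}
  one_mem' := ⟨K.one_mem, fun x => by simpa using L.one_mem⟩
  mul_mem' := by
    rintro a b ⟨haK, ha⟩ ⟨hbK, hb⟩
    refine ⟨K.mul_mem haK hbK, fun x => ?_⟩
    have := L.mul_mem (ha (b x)) (hb x)
    simpa [Equiv.Perm.mul_apply, mul_assoc] using this
  inv_mem' := by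
    rintro a ⟨haK, ha⟩
    refine ⟨K.inv_mem haK, fun x => ?_⟩
    have := L.inv_mem (ha (a⁻¹ x))
    simpa [mul_inv_rev] using this

/-- Two subsets `X`, `X'` are equivalent (w.r.t. `K` and `L`) if every element of
`K_𝔏` fixes `X` pointwise iff it fixes `X'` pointwise. -/
def cosetEquiv {A : Type*} [Group A] (K : Subgroup (Equiv.Perm A)) (L : Subgroup A)
    (X X' : Set A) : Prop :=
  ∀ f ∈ stabCosets K L,
    ((∀ x ∈ X, (f : Equiv.Perm A) x = x) ↔ (∀ x ∈ X', (f : Equiv.Perm A) x = x))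

/-- The union `U` of the right cosets of `L` that are equivalent to `L`. -/
def Uset {A : Type*} [Group A] (K : Subgroup (Equiv.Perm A)) (L : Subgroup A) : Set A :=
  {x : A | cosetEquiv K L (L : Set A) (rcoset L x)}

/-- A permutation group `K` is 2-closed if it contains every permutation `f` such
that every pair of points can be moved as by `f` by some element of `K`. -/
def Is2Closed {A : Type*} [Group A] (K : Subgroup (Equiv.Perm A)) : Prop :=
  ∀ f : Equiv.Perm A, (∀ a b : A, ∃ k ∈ K, (k : Equiv.Perm A) a = f a ∧ k b = f b) → f ∈ K


/-- The permutation `x ↦ a * x * b`. -/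
def biMul {A : Type*} [Group A] (a b : A) : Equiv.Perm A :=
  (Equiv.mulLeft a).trans (Equiv.mulRight b)

@[simp]
lemma biMul_apply {A : Type*} [Group A] (a b x : A) : biMul a b x = a * x * b := rfl

lemma biMul_mem {A : Type*} [Group A] {K : Subgroup (Equiv.Perm A)}
    (hK : starGroup (⊤ : Subgroup A) ≤ K) (a b : A) : biMul a b ∈ K :=
  hK ⟨(⟨a, Subgroup.mem_top a⟩, ⟨b⁻¹, Subgroup.mem_top b⁻¹⟩), by ext x; simp [biTransHom]⟩

namespace IsBlock

variable {A : Type*} [Group A] {K : Subgroup (Equiv.Perm A)} {B : Set A}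

lemma image_eq_of_apply_mem (hB : IsBlock K B) {k : Equiv.Perm A} (hk : k ∈ K) {x : A}
    (hx : x ∈ B) (hkx : k x ∈ B) : k '' B = B :=
  (hB k hk).resolve_right (Set.nonempty_iff_ne_empty.mp ⟨k x, ⟨x, hx, rfl⟩, hkx⟩)

lemma sInter {F : Set (Set A)} (hF : ∀ B ∈ F, IsBlock K B) : IsBlock K (⋂₀ F) := by
  intro k hk
  refine or_iff_not_imp_right.mpr fun hne => ?_
  obtain ⟨_, ⟨u, hu, rfl⟩, hku⟩ := Set.nonempty_iff_ne_empty.mpr hne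
  have himage : ∀ B ∈ F, k '' B = B := fun B hB =>
    (hF B hB).image_eq_of_apply_mem hk (hu B hB) (hku B hB)
  ext x
  simp only [Set.mem_sInter]
  constructor
  · rintro ⟨y, hy, rfl⟩ B hB
    exact himage B hB ▸ Set.mem_image_of_mem k (hy B hB)
  · intro hx
    refine ⟨k⁻¹ x, fun B hB => ?_, k.apply_symm_apply x⟩
    obtain ⟨y, hy, rfl⟩ := (himage B hB).symm ▸ hx B hB
    simpa using hy

lemma image_of_conj_mem (hB : IsBlock K B) {k : Equiv.Perm A}
    (hk : ∀ m ∈ K, k⁻¹ * m * k ∈ K) : IsBlock K (k '' B) := by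
  intro m hm
  have hconj : m '' (k '' B) = k '' ((k⁻¹ * m * k) '' B) := by
    simp only [Set.image_image, Equiv.Perm.mul_apply, Equiv.Perm.coe_inv, Equiv.apply_symm_apply]
  rcases hB _ (hk m hm) with h | h
  · exact .inl (by rw [hconj, h])
  · exact .inr (by rw [hconj, ← Set.image_inter k.injective, h, Set.image_empty])

def toSubgroup (hB : IsBlock K B) (h1 : (1 : A) ∈ B) (hleft : ∀ b ∈ B, biMul b 1 ∈ K) :
    Subgroup A where
  carrier := B
  one_mem' := h1
  mul_mem' {a b} ha hb := by
    have hab : biMul a 1 b ∈ biMul a 1 '' B := Set.mem_image_of_mem _ hb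
    rw [hB.image_eq_of_apply_mem (hleft a ha) h1 (by simpa using ha)] at hab
    simpa using hab
  inv_mem' {a} ha := by
    obtain ⟨x, hx, hx1⟩ := (hB.image_eq_of_apply_mem (hleft a ha) h1 (by simpa using ha)).symm ▸ h1
    simp only [biMul_apply, mul_one] at hx1
    rwa [← eq_inv_of_mul_eq_one_right hx1]

lemma conj_mem (hB : IsBlock K B) (h1 : (1 : A) ∈ B) {g : A} (hg : biMul g g⁻¹ ∈ K) {b : A}
    (hb : b ∈ B) : g * b * g⁻¹ ∈ B := by
  have hgb : biMul g g⁻¹ b ∈ biMul g g⁻¹ '' B := Set.mem_image_of_mem _ hb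
  rw [hB.image_eq_of_apply_mem hg h1 (by simpa using h1)] at hgb
  simpa using hgb

end IsBlock

section Socle

variable {G : Type*} [Group G] {S : Subgroup G}

/-- If `H ∩ S` were trivial, any `c ≠ 1` in `H` would commute with `S`, since each commutator
`c s c⁻¹ s⁻¹` lies in `H ∩ S`; simplicity of `S` then forces `H ∩ S = S`. -/
theorem Subgroup.le_of_ne_bot_of_conj_mem (hSnormal : S.Normal) (hSsimple : IsSimpleGroup S)
    (hScent : ∀ g : G, (∀ s ∈ S, g * s = s * g) → g = 1) {H : Subgroup G} (hH : H ≠ ⊥)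
    (hSH : ∀ s ∈ S, ∀ h ∈ H, s * h * s⁻¹ ∈ H) : S ≤ H := by
  have hnormal : (H.subgroupOf S).Normal :=
    ⟨fun h hh s => by simpa [Subgroup.mem_subgroupOf] using hSH s s.2 h hh⟩
  refine Subgroup.subgroupOf_eq_top.mp ((hnormal.eq_bot_or_eq_top).resolve_left fun hbot => ?_)
  obtain ⟨c, hcH, hc⟩ := H.bot_or_exists_ne_one.resolve_left hH
  refine hc (hScent c fun s hs => ?_)
  have hcommH : c * s * c⁻¹ * s⁻¹ ∈ H := by
    simpa only [mul_assoc] using H.mul_mem hcH (hSH s hs _ (H.inv_mem hcH))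
  have hcommS : c * s * c⁻¹ * s⁻¹ ∈ S := S.mul_mem (hSnormal.conj_mem s hs c) (S.inv_mem hs)
  have hcomm : (⟨_, hcommS⟩ : S) ∈ H.subgroupOf S := hcommH
  rw [hbot, Subgroup.mem_bot, Subtype.ext_iff] at hcomm
  exact mul_inv_eq_iff_eq_mul.mp (mul_inv_eq_one.mp hcomm)

theorem IsBlock.socle_subset (hSnormal : S.Normal) (hSsimple : IsSimpleGroup S)
    (hScent : ∀ g : G, (∀ s ∈ S, g * s = s * g) → g = 1) {K : Subgroup (Equiv.Perm G)}
    {B : Set G} (hB : IsBlock K B) (h1 : (1 : G) ∈ B) (hBnt : B.Nontrivial)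
    (hleft : ∀ b ∈ B, biMul b 1 ∈ K) (hconj : ∀ s ∈ S, biMul s s⁻¹ ∈ K) :
    (S : Set G) ⊆ B := by
  have hH : hB.toSubgroup h1 hleft ≠ ⊥ := fun hbot =>
    hBnt.not_subsingleton (show ((hB.toSubgroup h1 hleft : Subgroup G) : Set G).Subsingleton by
      simp [hbot])
  exact Subgroup.le_of_ne_bot_of_conj_mem hSnormal hSsimple hScent hH
    fun s hs h hh => hB.conj_mem h1 (hconj s hs) hh

end Socle

section Translations

variable {A : Type*} [Group A] {K : Subgroup (Equiv.Perm A)}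

/-- Writing `k = (· * k 1) ∘ φ` with `φ 1 = 1` shows that `k '' H = H * k 1` is a right
coset of `H`. -/
theorem isBlock_coe_of_fix_one_mapsTo (hK : starGroup (⊤ : Subgroup A) ≤ K)
    {H : Subgroup A} (hH : ∀ φ ∈ K, φ 1 = 1 → ∀ h ∈ H, φ h ∈ H) : IsBlock K H := by
  have hmaps : ∀ k ∈ K, ∀ u ∈ H, k u ∈ H → ∀ x ∈ H, k x ∈ H := by
    intro k hk u hu hku x hx
    set φ := biMul 1 (k 1)⁻¹ * k
    have hφ : φ ∈ K := K.mul_mem (biMul_mem hK _ _) hk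
    have hφ1 : φ 1 = 1 := by simp [φ]
    have hkφ : ∀ y, k y = φ y * k 1 := by simp [φ]
    have hk1 : k 1 ∈ H := by
      simpa [hkφ u] using H.mul_mem (H.inv_mem (hH φ hφ hφ1 u hu)) hku
    rw [hkφ]
    exact H.mul_mem (hH φ hφ hφ1 x hx) hk1
  intro k hk
  refine or_iff_not_imp_right.mpr fun hne => ?_
  obtain ⟨_, ⟨u, hu, rfl⟩, hku⟩ := Set.nonempty_iff_ne_empty.mpr hne
  refine subset_antisymm (Set.image_subset_iff.mpr fun x hx => hmaps k hk u hu hku x hx)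
    fun y hy => ⟨k⁻¹ y, hmaps k⁻¹ (K.inv_mem hk) (k u) hku (by simpa) y hy, by simp⟩

theorem IsBlock.mul_inv_mem_iff (hK : starGroup (⊤ : Subgroup A) ≤ K) {L : Subgroup A}
    (hL : IsBlock K L) {k : Equiv.Perm A} (hk : k ∈ K) (x y : A) :
    y * x⁻¹ ∈ L ↔ k y * (k x)⁻¹ ∈ L := by
  set k' := biMul 1 (k x)⁻¹ * k * biMul 1 x
  have hk' : k' ∈ K := K.mul_mem (K.mul_mem (biMul_mem hK _ _) hk) (biMul_mem hK _ _)
  have hk'app : ∀ z, k' z = k (z * x) * (k x)⁻¹ := by simp [k']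
  have himage : k' '' L = L := hL.image_eq_of_apply_mem hk' L.one_mem (by simp [hk'app])
  calc y * x⁻¹ ∈ L ↔ k' (y * x⁻¹) ∈ k' '' L := k'.injective.mem_set_image.symm
    _ ↔ k y * (k x)⁻¹ ∈ L := by rw [himage, hk'app, inv_mul_cancel_right]; rfl

theorem biMul_mem_stabCosets (hK : starGroup (⊤ : Subgroup A) ≤ K) {L : Subgroup A}
    (hL : L.Normal) {a b : A} (ha : a ∈ L) (hb : b ∈ L) : biMul a b ∈ stabCosets K L :=
  ⟨biMul_mem hK a b, fun x => by simpa [mul_assoc] using L.mul_mem ha (hL.conj_mem b hb x)⟩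

theorem conj_mem_stabCosets (hK : starGroup (⊤ : Subgroup A) ≤ K) {L : Subgroup A}
    (hL : IsBlock K L) {k : Equiv.Perm A} (hk : k ∈ K) {m : Equiv.Perm A}
    (hm : m ∈ stabCosets K L) : k⁻¹ * m * k ∈ stabCosets K L :=
  ⟨K.mul_mem (K.mul_mem (K.inv_mem hk) hm.1) hk, fun x => by
    simpa using (hL.mul_inv_mem_iff hK (K.inv_mem hk) (k x) (m (k x))).mp (hm.2 (k x))⟩

end Translations

theorem mul_inv_mem_of_mem_rcoset {A : Type*} [Group A] {L : Subgroup A} {g a b : A}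
    (ha : a ∈ rcoset L g) (hb : b ∈ rcoset L g) : b * a⁻¹ ∈ L := by
  simpa [mul_assoc] using L.mul_mem hb (L.inv_mem ha)

section MinBlock

variable {G : Type*} [Group G] {K : Subgroup (Equiv.Perm G)}

theorem isBlock_minBlock : IsBlock K (minBlock K) :=
  IsBlock.sInter fun _ hB => hB.1

theorem normal_of_coe_eq_minBlock (hK : starGroup (⊤ : Subgroup G) ≤ K) {L : Subgroup G}
    (hL : (L : Set G) = minBlock K) : L.Normal where
  conj_mem x hx g := by
    rw [← SetLike.mem_coe, hL] at hx ⊢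
    exact Set.mem_sInter.mpr fun B hBmem =>
      hBmem.1.conj_mem hBmem.2.1 (biMul_mem hK g g⁻¹) (hx B hBmem)

theorem socle_le_of_coe_eq_minBlock {S : Subgroup G} (hSnormal : S.Normal)
    (hSsimple : IsSimpleGroup S) (hScent : ∀ g : G, (∀ s ∈ S, g * s = s * g) → g = 1)
    (hK : starGroup (⊤ : Subgroup G) ≤ K) {L : Subgroup G} (hL : (L : Set G) = minBlock K) :
    S ≤ L := by
  intro s hs
  rw [← SetLike.mem_coe, hL]
  exact Set.mem_sInter.mpr fun B ⟨hB, h1, hcard⟩ =>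
    hB.socle_subset hSnormal hSsimple hScent h1
      (Set.one_lt_ncard_iff_nontrivial_and_finite.mp hcard).1
      (fun b _ => biMul_mem hK b 1) (fun s _ => biMul_mem hK s s⁻¹) hs

end MinBlock

section StabCosetsBlocks

variable {G : Type*} [Group G] {K : Subgroup (Equiv.Perm G)} {L : Subgroup G}

def stabCosetsBlocks (K : Subgroup (Equiv.Perm G)) (L : Subgroup G) : Set (Set G) :=
  {N | N ⊆ L ∧ IsBlock (stabCosets K L) N ∧ (1 : G) ∈ N ∧ N.Nontrivial}

theorem image_mem_stabCosetsBlocks (hK : starGroup (⊤ : Subgroup G) ≤ K)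
    (hLblock : IsBlock K L) {φ : Equiv.Perm G} (hφ : φ ∈ K) (hφ1 : φ 1 = 1) {N : Set G}
    (hN : N ∈ stabCosetsBlocks K L) : φ '' N ∈ stabCosetsBlocks K L := by
  obtain ⟨hNL, hNblock, hN1, hNnt⟩ := hN
  refine ⟨?_, hNblock.image_of_conj_mem fun m hm => conj_mem_stabCosets hK hLblock hφ hm,
    ⟨1, hN1, hφ1⟩, hNnt.image φ.injective⟩
  have hφL : φ '' L = L := hLblock.image_eq_of_apply_mem hφ L.one_mem (by rw [hφ1]; exact L.one_mem)
  exact hφL ▸ Set.image_mono hNL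

theorem socle_subset_of_mem_stabCosetsBlocks {S : Subgroup G} (hSnormal : S.Normal)
    (hSsimple : IsSimpleGroup S) (hScent : ∀ g : G, (∀ s ∈ S, g * s = s * g) → g = 1)
    (hK : starGroup (⊤ : Subgroup G) ≤ K) (hLnormal : L.Normal) (hSL : S ≤ L) {N : Set G}
    (hN : N ∈ stabCosetsBlocks K L) : (S : Set G) ⊆ N :=
  hN.2.1.socle_subset hSnormal hSsimple hScent hN.2.2.1 hN.2.2.2
    (fun _ hb => biMul_mem_stabCosets hK hLnormal (hN.1 hb) L.one_mem)
    (fun _ hs => biMul_mem_stabCosets hK hLnormal (hSL hs) (L.inv_mem (hSL hs)))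

theorem sInter_stabCosetsBlocks_mem {S : Subgroup G} (hSnormal : S.Normal)
    (hSsimple : IsSimpleGroup S) (hScent : ∀ g : G, (∀ s ∈ S, g * s = s * g) → g = 1)
    (hK : starGroup (⊤ : Subgroup G) ≤ K) (hLnormal : L.Normal) (hSL : S ≤ L)
    (hne : (stabCosetsBlocks K L).Nonempty) : ⋂₀ stabCosetsBlocks K L ∈ stabCosetsBlocks K L := by
  obtain ⟨N, hN⟩ := hne
  have hSM : (S : Set G) ⊆ ⋂₀ stabCosetsBlocks K L := fun s hs => Set.mem_sInter.mpr
    fun N hN => socle_subset_of_mem_stabCosetsBlocks hSnormal hSsimple hScent hK hLnormal hSL hN hs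
  have hSnt : (S : Set G).Nontrivial := Set.nontrivial_coe_sort.mp hSsimple.toNontrivial
  exact ⟨(Set.sInter_subset_of_mem hN).trans hN.1, IsBlock.sInter fun _ hN => hN.2.1,
    Set.mem_sInter.mpr fun _ hN => hN.2.2.1, hSnt.mono hSM⟩

theorem isBlock_sInter_stabCosetsBlocks (hK : starGroup (⊤ : Subgroup G) ≤ K)
    (hLnormal : L.Normal) (hLblock : IsBlock K L)
    (hM : ⋂₀ stabCosetsBlocks K L ∈ stabCosetsBlocks K L) :
    IsBlock K (⋂₀ stabCosetsBlocks K L) := by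
  refine isBlock_coe_of_fix_one_mapsTo hK (H := hM.2.1.toSubgroup hM.2.2.1
    fun _ hb => biMul_mem_stabCosets hK hLnormal (hM.1 hb) L.one_mem)
    fun φ hφ hφ1 x hx => Set.mem_sInter.mpr fun N hN => ?_
  have hφinv1 : φ⁻¹ 1 = 1 := by rw [Equiv.Perm.inv_eq_iff_eq, hφ1]
  obtain ⟨y, hy, rfl⟩ :=
    Set.mem_sInter.mp hx _ (image_mem_stabCosetsBlocks hK hLblock (K.inv_mem hφ) hφinv1 hN)
  simpa using hy

end StabCosetsBlocks

section Primitivity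

variable {G : Type*} [Group G] [Finite G] {S : Subgroup G} {K : Subgroup (Equiv.Perm G)}
  {L : Subgroup G}

theorem eq_of_mem_stabCosetsBlocks (hSnormal : S.Normal) (hSsimple : IsSimpleGroup S)
    (hScent : ∀ g : G, (∀ s ∈ S, g * s = s * g) → g = 1) (hK : starGroup (⊤ : Subgroup G) ≤ K)
    (hL : (L : Set G) = minBlock K) {N : Set G} (hN : N ∈ stabCosetsBlocks K L) : N = L := by
  have hLnormal := normal_of_coe_eq_minBlock hK hL
  have hLblock : IsBlock K L := hL ▸ isBlock_minBlock
  have hM := sInter_stabCosetsBlocks_mem hSnormal hSsimple hScent hK hLnormal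
    (socle_le_of_coe_eq_minBlock hSnormal hSsimple hScent hK hL) ⟨N, hN⟩
  have hLM : (L : Set G) ⊆ ⋂₀ stabCosetsBlocks K L := hL ▸ Set.sInter_subset_of_mem
    ⟨isBlock_sInter_stabCosetsBlocks hK hLnormal hLblock hM, hM.2.2.1,
      Set.one_lt_ncard_iff_nontrivial.mpr hM.2.2.2⟩
  exact subset_antisymm hN.1 (hLM.trans (Set.sInter_subset_of_mem hN))

theorem eq_rcoset_of_isBlock_stabCosets (hSnormal : S.Normal) (hSsimple : IsSimpleGroup S)
    (hScent : ∀ g : G, (∀ s ∈ S, g * s = s * g) → g = 1) (hK : starGroup (⊤ : Subgroup G) ≤ K)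
    (hL : (L : Set G) = minBlock K) {g : G} {B : Set G} (hBg : B ⊆ rcoset L g)
    (hB : IsBlock (stabCosets K L) B) (hBnt : B.Nontrivial) : B = rcoset L g := by
  obtain ⟨x₀, hx₀⟩ := hBnt.nonempty
  have hLblock : IsBlock K L := hL ▸ isBlock_minBlock
  have hτ : biMul 1 x₀⁻¹ ∈ K := biMul_mem hK 1 x₀⁻¹
  have hτB : biMul 1 x₀⁻¹ '' B = L := by
    refine eq_of_mem_stabCosetsBlocks hSnormal hSsimple hScent hK hL ⟨?_,
      hB.image_of_conj_mem fun m hm => conj_mem_stabCosets hK hLblock hτ hm,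
      ⟨x₀, hx₀, by simp⟩, hBnt.image (Equiv.injective _)⟩
    rintro _ ⟨z, hz, rfl⟩
    simpa using mul_inv_mem_of_mem_rcoset (hBg hx₀) (hBg hz)
  refine subset_antisymm hBg fun y hy => ?_
  obtain ⟨z, hz, hzy⟩ : y * x₀⁻¹ ∈ biMul 1 x₀⁻¹ '' B :=
    hτB ▸ mul_inv_mem_of_mem_rcoset (hBg hx₀) hy
  rw [biMul_apply, one_mul] at hzy
  rwa [← mul_right_cancel hzy]

end Primitivity

theorem stabCosets_primitive_on_cosets_general (G : Type*) [Group G] [Fintype G]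
    (S : Subgroup G) (hSnormal : S.Normal) (hSsimple : IsSimpleGroup S)
    (hScent : ∀ g : G, (∀ s ∈ S, g * s = s * g) → g = 1)
    (K : Subgroup (Equiv.Perm G)) (hGK : starGroup (⊤ : Subgroup G) ≤ K)
    (L : Subgroup G) (hL : (L : Set G) = minBlock K) (g : G) :
    (∀ a ∈ rcoset L g, ∀ b ∈ rcoset L g, ∃ k ∈ stabCosets K L, (k : Equiv.Perm G) a = b) ∧
    (∀ B : Set G, B ⊆ rcoset L g →
      (∀ k ∈ stabCosets K L,
        (k : Equiv.Perm G) '' B = B ∨ ((k : Equiv.Perm G) '' B) ∩ B = ∅) →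
      B.Subsingleton ∨ B = rcoset L g) ∧
    (∀ l₁ ∈ L, ∀ l₂ ∈ L, ∃ k ∈ stabCosets K L,
      ∀ x ∈ rcoset L g, (k : Equiv.Perm G) x = l₁ * x * l₂) := by
  have hLnormal := normal_of_coe_eq_minBlock hGK hL
  refine ⟨fun a ha b hb => ?_, fun B hBg hB => ?_, fun l₁ hl₁ l₂ hl₂ => ?_⟩
  · exact ⟨biMul (b * a⁻¹) 1,
      biMul_mem_stabCosets hGK hLnormal (mul_inv_mem_of_mem_rcoset ha hb) L.one_mem, by simp⟩
  · refine or_iff_not_imp_left.mpr fun hBnt => ?_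
    exact eq_rcoset_of_isBlock_stabCosets hSnormal hSsimple hScent hGK hL hBg hB
      (Set.not_subsingleton_iff.mp hBnt)
  · exact ⟨biMul l₁ l₂, biMul_mem_stabCosets hGK hLnormal hl₁ hl₂, fun _ _ => rfl⟩

/-- the group induced by `K_𝔏` on each right coset of the minimal block
`L` is primitive and contains every permutation `x ↦ l₁ * x * l₂` with `l₁, l₂ ∈ L`. -/
theorem stabCosets_primitive_on_cosets (G : Type*) [Group G] [Fintype G]
    (S : Subgroup G) (hSnormal : S.Normal) (hSsimple : IsSimpleGroup S)
    (hSnonabelian : ¬ ∀ a b : S, a * b = b * a)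
    (hScent : ∀ g : G, (∀ s ∈ S, g * s = s * g) → g = 1)
    (K : Subgroup (Equiv.Perm G)) (hGK : starGroup (⊤ : Subgroup G) ≤ K)
    (L : Subgroup G) (hL : (L : Set G) = minBlock K) (g : G) :
    (∀ a ∈ rcoset L g, ∀ b ∈ rcoset L g, ∃ k ∈ stabCosets K L, (k : Equiv.Perm G) a = b) ∧
    (∀ B : Set G, B ⊆ rcoset L g →
      (∀ k ∈ stabCosets K L,
        (k : Equiv.Perm G) '' B = B ∨ ((k : Equiv.Perm G) '' B) ∩ B = ∅) →
      B.Subsingleton ∨ B = rcoset L g) ∧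
    (∀ l₁ ∈ L, ∀ l₂ ∈ L, ∃ k ∈ stabCosets K L,
      ∀ x ∈ rcoset L g, (k : Equiv.Perm G) x = l₁ * x * l₂) :=
  stabCosets_primitive_on_cosets_general G S hSnormal hSsimple hScent K hGK L hL g
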